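/- ∑_{n=1}^∞ H_n / (n² (n+1) (n+2)) = ζ(3) − (3/4) ζ(2) + 1/4. -/
import Mathlib

open scoped BigOperators

set_option maxHeartbeats 1000000
open Finset Filter Topology

lemma Hreal (n : ℕ) : (harmonic n : ℝ) = ∑ i ∈ Finset.range n, (1:ℝ)/((i:ℝ)+1) := by
  unfold harmonic
  push_cast
  simp [one_div]

lemma Hnn (n : ℕ) : 0 ≤ (harmonic n : ℝ) := by
  rw [Hreal]; positivity

lemma Hmono {m n : ℕ} (h : m ≤ n) : (harmonic m : ℝ) ≤ (harmonic n : ℝ) := by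
  rw [Hreal, Hreal]
  apply Finset.sum_le_sum_of_subset_of_nonneg (Finset.range_subset_range.2 h)
  intro i _ _; positivity

lemma H_le_sqrt (n : ℕ) : (harmonic n : ℝ) ≤ 2 * Real.sqrt n := by
  induction n with
  | zero => simp
  | succ n ih =>
    rw [harmonic_succ]
    push_cast
    have h1 : Real.sqrt n ^ 2 = n := Real.sq_sqrt (by positivity)
    have h2 : Real.sqrt (n+1) ^ 2 = (n:ℝ)+1 := Real.sq_sqrt (by positivity)
    have h3 : (0:ℝ) ≤ Real.sqrt n := Real.sqrt_nonneg _
    have h4 : (0:ℝ) ≤ Real.sqrt (n+1) := Real.sqrt_nonneg _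
    have h5 : Real.sqrt n ≤ Real.sqrt (n+1) := Real.sqrt_le_sqrt (by norm_num)
    have h6 : Real.sqrt (n+1) ≤ (n:ℝ)+1 := by
      nlinarith
    have key : ((n:ℝ)+1)⁻¹ ≤ 2 * (Real.sqrt (n+1) - Real.sqrt n) := by
      rw [inv_le_iff_one_le_mul₀ (by positivity)]
      nlinarith
    push_cast at ih ⊢
    linarith

lemma H_le_sqrt' (n : ℕ) : (harmonic (n+1) : ℝ) ≤ 2 * Real.sqrt ((n:ℝ)+1) := by
  have := H_le_sqrt (n+1)
  push_cast at this
  exact this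

lemma sqrt_div_pow (x : ℝ) (hx : 0 < x) (k : ℕ) :
    Real.sqrt x / x ^ k = x ^ ((1:ℝ)/2 - k) := by
  rw [Real.sqrt_eq_rpow, ← Real.rpow_natCast x k, ← Real.rpow_sub hx]

lemma summable_rpow32 : Summable (fun n : ℕ => ((n:ℝ)+1) ^ ((1:ℝ)/2 - (2:ℕ))) := by
  have h := Real.summable_one_div_nat_rpow.2 (by norm_num : (1:ℝ) < 3/2)
  have h2 := (summable_nat_add_iff 1).2 h
  refine h2.congr fun n => ?_
  rw [one_div, ← Real.rpow_neg (by positivity)]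
  push_cast
  norm_num

lemma summable_a : Summable (fun n : ℕ => (harmonic (n+1) : ℝ) / ((n:ℝ)+1)^2) := by
  have hle : ∀ n : ℕ, (harmonic (n+1) : ℝ) / ((n:ℝ)+1)^2
      ≤ 2 * (((n:ℝ)+1) ^ ((1:ℝ)/2 - (2:ℕ))) := by
    intro n
    have hx : (0:ℝ) < (n:ℝ)+1 := by positivity
    have h1 : (harmonic (n+1) : ℝ) / ((n:ℝ)+1)^2 ≤ 2 * Real.sqrt ((n:ℝ)+1) / ((n:ℝ)+1)^2 := by
      gcongr
      exact H_le_sqrt' n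
    refine h1.trans_eq ?_
    rw [mul_div_assoc, sqrt_div_pow _ hx]
  exact Summable.of_nonneg_of_le (fun n => div_nonneg (Hnn _) (by positivity)) hle
    (summable_rpow32.mul_left 2)

lemma tendsto_H_div : Tendsto (fun N : ℕ => (harmonic (N+1) : ℝ) / ((N:ℝ)+1)) atTop (𝓝 0) := by
  refine squeeze_zero (g := fun N : ℕ => 2 * (((N:ℝ)+1) ^ (-((1:ℝ)/2))))
    (fun N => div_nonneg (Hnn _) (by positivity)) (fun N => ?_) ?_
  · have hx : (0:ℝ) < (N:ℝ)+1 := by positivity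
    have h1 : (harmonic (N+1) : ℝ) / ((N:ℝ)+1) ≤ 2 * Real.sqrt ((N:ℝ)+1) / ((N:ℝ)+1) := by
      gcongr
      exact H_le_sqrt' N
    refine h1.trans_eq ?_
    have := sqrt_div_pow ((N:ℝ)+1) hx 1
    rw [pow_one] at this
    rw [mul_div_assoc, this]
    norm_num
  · have h := tendsto_rpow_neg_atTop (by norm_num : (0:ℝ) < 1/2)
    have h2 : Tendsto (fun N : ℕ => (N:ℝ)+1) atTop atTop :=
      tendsto_atTop_add_const_right _ 1 tendsto_natCast_atTop_atTop
    have h3 := (h.comp h2).const_mul (2:ℝ)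
    simpa using h3

lemma tsum_eq_of_tendsto {f : ℕ → ℝ} {L : ℝ} (hf : Summable f)
    (h : Tendsto (fun N => ∑ n ∈ Finset.range N, f n) atTop (𝓝 L)) : ∑' n, f n = L :=
  tendsto_nhds_unique hf.hasSum.tendsto_sum_nat h

lemma summable_z (k : ℕ) (hk : 2 ≤ k) : Summable (fun n : ℕ => 1 / ((n:ℝ)+1)^k) := by
  have h := Real.summable_one_div_nat_pow.2 hk
  have h2 := (summable_nat_add_iff 1).2 h
  refine h2.congr fun n => ?_
  push_cast
  ring_nf

lemma summable_e : Summable (fun n : ℕ => 1 / ((n:ℝ)+2)^2) := by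
  have h2 := (summable_nat_add_iff 1).2 (summable_z 2 le_rfl)
  refine h2.congr fun n => ?_
  push_cast
  ring_nf

lemma summable_b : Summable (fun n : ℕ => (harmonic (n+1) : ℝ) / (((n:ℝ)+1)*((n:ℝ)+2))) := by
  refine Summable.of_nonneg_of_le
    (fun n => div_nonneg (Hnn _) (by positivity)) (fun n => ?_) summable_a
  have hx : (0:ℝ) < (n:ℝ)+1 := by positivity
  gcongr
  · exact Hnn _
  · nlinarith

lemma summable_c : Summable (fun n : ℕ => (harmonic (n+1) : ℝ) / (((n:ℝ)+2)*((n:ℝ)+3))) := by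
  refine Summable.of_nonneg_of_le
    (fun n => div_nonneg (Hnn _) (by positivity)) (fun n => ?_) summable_a
  have hx : (0:ℝ) < (n:ℝ)+1 := by positivity
  gcongr
  · exact Hnn _
  · nlinarith

lemma L2 : ∑' n : ℕ, (harmonic (n+1) : ℝ) / (((n:ℝ)+1)*((n:ℝ)+2))
    = ∑' n : ℕ, 1 / ((n:ℝ)+1)^2 := by
  set u : ℕ → ℝ := fun n => (harmonic (n+1) : ℝ)/((n:ℝ)+1) with hu
  have key : ∀ n : ℕ, (harmonic (n+1) : ℝ) / (((n:ℝ)+1)*((n:ℝ)+2))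
      = (u n - u (n+1)) + 1/((n:ℝ)+2)^2 := by
    intro n
    simp only [hu]
    have h2 : (harmonic (n+1+1) : ℝ) = (harmonic (n+1) : ℝ) + 1/((n:ℝ)+2) := by
      rw [harmonic_succ (n+1)]
      push_cast
      ring
    rw [h2]
    push_cast
    field_simp
    ring
  refine tsum_eq_of_tendsto summable_b ?_
  have hps : ∀ N : ℕ, ∑ n ∈ Finset.range N, (harmonic (n+1) : ℝ) / (((n:ℝ)+1)*((n:ℝ)+2))
      = (1 - u N) + ∑ n ∈ Finset.range N, 1/((n:ℝ)+2)^2 := by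
    intro N
    rw [Finset.sum_congr rfl (fun n _ => key n), Finset.sum_add_distrib,
      Finset.sum_range_sub' u N]
    have : u 0 = 1 := by simp [hu]
    rw [this]
  simp only [hps]
  have h1 : Tendsto (fun N : ℕ => 1 - u N) atTop (𝓝 1) := by
    simpa only [sub_zero] using (tendsto_const_nhds (x := (1:ℝ))).sub tendsto_H_div
  have h2 : Tendsto (fun N : ℕ => ∑ n ∈ Finset.range N, 1/((n:ℝ)+2)^2) atTop
      (𝓝 (∑' n : ℕ, 1 / ((n:ℝ)+2)^2)) := summable_e.hasSum.tendsto_sum_nat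
  have h3 := h1.add h2
  have hz : ∑' n : ℕ, 1 / ((n:ℝ)+1)^2 = 1 + ∑' n : ℕ, 1 / ((n:ℝ)+2)^2 := by
    rw [Summable.tsum_eq_zero_add (summable_z 2 le_rfl)]
    congr 1
    · norm_num
    · exact tsum_congr fun n => by push_cast; ring_nf
  rw [hz]
  exact h3

lemma L3 : ∑' n : ℕ, (harmonic (n+1) : ℝ) / (((n:ℝ)+2)*((n:ℝ)+3)) = 1 := by
  set v : ℕ → ℝ := fun n => (harmonic (n+1) : ℝ)/((n:ℝ)+2) + 1/((n:ℝ)+2) with hv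
  have key : ∀ n : ℕ, (harmonic (n+1) : ℝ) / (((n:ℝ)+2)*((n:ℝ)+3))
      = v n - v (n+1) := by
    intro n
    simp only [hv]
    have h2 : (harmonic (n+1+1) : ℝ) = (harmonic (n+1) : ℝ) + 1/((n:ℝ)+2) := by
      rw [harmonic_succ (n+1)]
      push_cast
      ring
    rw [h2]
    push_cast
    field_simp
    ring
  refine tsum_eq_of_tendsto summable_c ?_
  have hps : ∀ N : ℕ, ∑ n ∈ Finset.range N, (harmonic (n+1) : ℝ) / (((n:ℝ)+2)*((n:ℝ)+3))
      = v 0 - v N := by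
    intro N
    rw [Finset.sum_congr rfl (fun n _ => key n), Finset.sum_range_sub' v N]
  simp only [hps]
  have hv0 : v 0 = 1 := by norm_num [hv]
  rw [hv0]
  have hvN : Tendsto v atTop (𝓝 0) := by
    have hA : Tendsto (fun N : ℕ => (harmonic (N+1) : ℝ)/((N:ℝ)+2)) atTop (𝓝 0) := by
      refine squeeze_zero (fun N => div_nonneg (Hnn _) (by positivity)) (fun N => ?_)
        tendsto_H_div
      gcongr
      · exact Hnn _
      · linarith
    have hB : Tendsto (fun N : ℕ => 1/((N:ℝ)+2)) atTop (𝓝 0) := by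
      apply Tendsto.div_atTop tendsto_const_nhds
      exact tendsto_atTop_add_const_right _ 2 tendsto_natCast_atTop_atTop
    simpa only [add_zero] using hA.add hB
  simpa only [sub_zero] using (tendsto_const_nhds (x := (1:ℝ))).sub hvN

noncomputable def gg : ℕ × ℕ → ℝ :=
  fun p => 1/(((p.1:ℝ)+1)*((p.2:ℝ)+1)*((p.1:ℝ)+(p.2:ℝ)+2))

lemma gg_nonneg : ∀ p : ℕ × ℕ, 0 ≤ gg p := by
  intro p; unfold gg; positivity

lemma rpow_neg32 {x : ℝ} (hx : 0 < x) : x ^ (-(3/2) : ℝ) = 1/(x * Real.sqrt x) := by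
  rw [Real.rpow_neg hx.le, one_div]
  congr 1
  rw [show (3/2 : ℝ) = 1 + 1/2 by norm_num, Real.rpow_add hx, Real.rpow_one,
    Real.sqrt_eq_rpow]

lemma summable_gg : Summable gg := by
  have base : Summable (fun n : ℕ => ((n:ℝ)+1) ^ (-(3/2) : ℝ)) := by
    refine summable_rpow32.congr fun n => ?_
    norm_num
  have hprod := base.mul_of_nonneg base (fun n => by positivity) (fun n => by positivity)
  refine Summable.of_nonneg_of_le gg_nonneg (fun p => ?_) hprod
  obtain ⟨m, n⟩ := p
  simp only
  set x : ℝ := (m:ℝ)+1 with hx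
  set y : ℝ := (n:ℝ)+1 with hy
  have hx0 : (0:ℝ) < x := by positivity
  have hy0 : (0:ℝ) < y := by positivity
  have hxs : Real.sqrt x ^ 2 = x := Real.sq_sqrt hx0.le
  have hys : Real.sqrt y ^ 2 = y := Real.sq_sqrt hy0.le
  have hxsn := Real.sqrt_nonneg x
  have hysn := Real.sqrt_nonneg y
  rw [rpow_neg32 hx0, rpow_neg32 hy0]
  have hgg : gg (m, n) = 1/(x*y*(x+y)) := by
    unfold gg
    rw [hx, hy]
    ring_nf
  rw [hgg, div_mul_div_comm, one_mul]
  apply one_div_le_one_div_of_le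
  · positivity
  · nlinarith [sq_nonneg (Real.sqrt x - Real.sqrt y), mul_nonneg hxsn hysn,
      mul_pos hx0 hy0]

-- difference of harmonic numbers bound
lemma Hdiff (k N : ℕ) : (harmonic (k+N) : ℝ) - harmonic N ≤ k * (1/((N:ℝ)+1)) := by
  induction k with
  | zero => simp
  | succ k ih =>
    have : (harmonic (k+1+N) : ℝ) = (harmonic (k+N) : ℝ) + 1/((k:ℝ)+(N:ℝ)+1) := by
      have : k+1+N = (k+N)+1 := by ring
      rw [this, harmonic_succ]
      push_cast
      ring
    rw [this]
    have h1 : 1/((k:ℝ)+(N:ℝ)+1) ≤ 1/((N:ℝ)+1) := by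
      apply one_div_le_one_div_of_le
      · positivity
      · have : (0:ℝ) ≤ k := Nat.cast_nonneg k
        linarith
    push_cast
    push_cast at ih
    linarith

lemma tendsto_Hdiff (k : ℕ) :
    Tendsto (fun N : ℕ => (harmonic (k+N) : ℝ) - harmonic N) atTop (𝓝 0) := by
  refine squeeze_zero (fun N => by linarith [Hmono (Nat.le_add_left N k)]) (fun N => Hdiff k N) ?_
  have hB : Tendsto (fun N : ℕ => 1/((N:ℝ)+1)) atTop (𝓝 0) := by
    apply Tendsto.div_atTop tendsto_const_nhds
    exact tendsto_atTop_add_const_right _ 1 tendsto_natCast_atTop_atTop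
  simpa using hB.const_mul (k:ℝ)

-- inner telescoping sum
lemma inner_tele (m : ℕ) :
    ∑' n : ℕ, (1/((n:ℝ)+1) - 1/((n:ℝ)+(m:ℝ)+2)) = (harmonic (m+1) : ℝ) := by
  have hsummand : ∀ n : ℕ, 1/((n:ℝ)+1) - 1/((n:ℝ)+(m:ℝ)+2)
      = ((m:ℝ)+1) * (1/(((n:ℝ)+1)*((n:ℝ)+(m:ℝ)+2))) := by
    intro n
    have h1 : (0:ℝ) < (n:ℝ)+1 := by positivity
    have h2 : (0:ℝ) < (n:ℝ)+(m:ℝ)+2 := by positivity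
    field_simp
    ring
  have hsumm : Summable (fun n : ℕ => 1/((n:ℝ)+1) - 1/((n:ℝ)+(m:ℝ)+2)) := by
    refine Summable.of_nonneg_of_le (fun n => ?_) (fun n => ?_)
      ((summable_z 2 le_rfl).mul_left ((m:ℝ)+1))
    · rw [hsummand]
      positivity
    · rw [hsummand]
      have hpos : (0:ℝ) < ((n:ℝ)+1)^2 := by positivity
      have hmul : ((n:ℝ)+1)^2 ≤ ((n:ℝ)+1)*((n:ℝ)+(m:ℝ)+2) := by
        nlinarith [(Nat.cast_nonneg m : (0:ℝ) ≤ (m:ℝ)), (Nat.cast_nonneg n : (0:ℝ) ≤ (n:ℝ))]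
      have hle : 1/(((n:ℝ)+1)*((n:ℝ)+(m:ℝ)+2)) ≤ 1/(((n:ℝ)+1)^2) :=
        one_div_le_one_div_of_le hpos hmul
      exact mul_le_mul_of_nonneg_left hle (by positivity)
  refine tsum_eq_of_tendsto hsumm ?_
  have hps : ∀ N : ℕ, ∑ n ∈ Finset.range N, (1/((n:ℝ)+1) - 1/((n:ℝ)+(m:ℝ)+2))
      = (harmonic (m+1) : ℝ) - ((harmonic (m+1+N) : ℝ) - harmonic N) := by
    intro N
    rw [Finset.sum_sub_distrib]
    have e1 : ∑ n ∈ Finset.range N, 1/((n:ℝ)+1) = (harmonic N : ℝ) := (Hreal N).symm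
    have e2 : ∑ n ∈ Finset.range N, 1/((n:ℝ)+(m:ℝ)+2)
        = (harmonic (m+1+N) : ℝ) - (harmonic (m+1) : ℝ) := by
      rw [Hreal (m+1+N), Hreal (m+1),
        ← Finset.sum_range_add_sum_Ico (fun i => (1:ℝ)/((i:ℝ)+1)) (Nat.le_add_right (m+1) N)]
      rw [Finset.sum_Ico_eq_sum_range]
      simp only [add_tsub_cancel_left]
      have : ∀ n ∈ Finset.range N, (1:ℝ)/(((m+1+n : ℕ):ℝ)+1) = 1/((n:ℝ)+(m:ℝ)+2) := by
        intro n _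
        push_cast
        ring_nf
      rw [Finset.sum_congr rfl this]
    rw [e1, e2]
    ring
  simp only [hps]
  simpa using tendsto_const_nhds.sub (tendsto_Hdiff (m+1))

noncomputable def FF : ℕ × ℕ → ℝ :=
  fun p => if p.2 < p.1 then 1/(((p.2:ℝ)+1)*((p.1:ℝ)+1)^2) else 0

noncomputable def g1 : ℕ × ℕ → ℝ := fun q => 1/(((q.1:ℝ)+1)*((q.1:ℝ)+(q.2:ℝ)+2)^2)

def ii : ℕ × ℕ → ℕ × ℕ := fun q => (q.1+q.2+1, q.1)

lemma wayA : ∑' p, gg p = ∑' m : ℕ, (harmonic (m+1) : ℝ)/((m:ℝ)+1)^2 := by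
  rw [Summable.tsum_prod summable_gg]
  refine tsum_congr fun m => ?_
  have hident : ∀ n : ℕ, gg (m, n)
      = (1/((m:ℝ)+1)^2) * (1/((n:ℝ)+1) - 1/((n:ℝ)+(m:ℝ)+2)) := by
    intro n
    unfold gg
    have h1 : ((m:ℝ)+1) ≠ 0 := by positivity
    have h2 : ((n:ℝ)+1) ≠ 0 := by positivity
    have h3 : ((n:ℝ)+(m:ℝ)+2) ≠ 0 := by positivity
    have h4 : ((m:ℝ)+(n:ℝ)+2) ≠ 0 := by positivity
    field_simp
    ring
  rw [tsum_congr hident, tsum_mul_left, inner_tele m]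
  ring

lemma ii_inj : Function.Injective ii := by
  intro a b h
  unfold ii at h
  rw [Prod.ext_iff] at h ⊢
  simp only at h ⊢
  omega

lemma FF_comp : ∀ q, FF (ii q) = g1 q := by
  intro q
  unfold FF ii g1
  simp only
  rw [if_pos (by omega)]
  push_cast
  ring_nf

lemma FF_supp : Function.support FF ⊆ Set.range ii := by
  intro p hp
  by_cases h : p.2 < p.1
  · refine ⟨(p.2, p.1 - p.2 - 1), ?_⟩
    unfold ii
    rw [Prod.ext_iff]
    refine ⟨?_, rfl⟩
    simp only
    omega
  · exfalso
    apply hp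
    unfold FF
    rw [if_neg h]

lemma summable_g1 : Summable g1 := by
  refine Summable.of_nonneg_of_le (fun q => by unfold g1; positivity) (fun q => ?_) summable_gg
  obtain ⟨m, n⟩ := q
  unfold g1 gg
  simp only
  have hpos : (0:ℝ) < ((m:ℝ)+1)*((n:ℝ)+1)*((m:ℝ)+(n:ℝ)+2) := by positivity
  refine one_div_le_one_div_of_le hpos ?_
  nlinarith [(Nat.cast_nonneg m : (0:ℝ) ≤ (m:ℝ)), (Nat.cast_nonneg n : (0:ℝ) ≤ (n:ℝ))]

lemma FF_zero : ∀ x ∉ Set.range ii, FF x = 0 := fun x hx => by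
  by_contra hne
  exact hx (FF_supp hne)

lemma summable_FF : Summable FF :=
  (ii_inj.summable_iff FF_zero).1 (summable_g1.congr (fun q => (FF_comp q).symm))

lemma tsum_g1 : ∑' q, g1 q = ∑' k : ℕ, (harmonic k : ℝ)/((k:ℝ)+1)^2 := by
  have h1 : ∑' q, g1 q = ∑' p, FF p := by
    rw [← ii_inj.tsum_eq FF_supp]
    exact tsum_congr fun q => (FF_comp q).symm
  rw [h1, Summable.tsum_prod summable_FF]
  refine tsum_congr fun k => ?_
  have h2 : ∑' m : ℕ, FF (k, m) = ∑ m ∈ Finset.range k, FF (k, m) := by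
    refine tsum_eq_sum fun m hm => ?_
    unfold FF
    simp only
    rw [if_neg]
    simp only [Finset.mem_range] at hm
    omega
  rw [h2]
  have h3 : ∀ m ∈ Finset.range k, FF (k, m) = (1/((m:ℝ)+1)) * (1/((k:ℝ)+1)^2) := by
    intro m hm
    unfold FF
    simp only
    rw [if_pos (Finset.mem_range.1 hm)]
    have h1 : ((m:ℝ)+1) ≠ 0 := by positivity
    have h2 : ((k:ℝ)+1) ≠ 0 := by positivity
    field_simp
  rw [Finset.sum_congr rfl h3, ← Finset.sum_mul, ← Hreal k]
  ring

lemma gg_split : ∀ q : ℕ × ℕ, gg q = g1 q + g1 (q.2, q.1) := by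
  intro ⟨m, n⟩
  unfold gg g1
  simp only
  have h1 : ((m:ℝ)+1) ≠ 0 := by positivity
  have h2 : ((n:ℝ)+1) ≠ 0 := by positivity
  have h3 : ((m:ℝ)+(n:ℝ)+2) ≠ 0 := by positivity
  have h4 : ((n:ℝ)+(m:ℝ)+2) ≠ 0 := by positivity
  field_simp
  ring

lemma summable_g1swap : Summable (fun q : ℕ × ℕ => g1 (q.2, q.1)) :=
  (Equiv.prodComm ℕ ℕ).summable_iff.2 summable_g1

lemma tsum_g1swap : ∑' q : ℕ × ℕ, g1 (q.2, q.1) = ∑' q, g1 q :=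
  (Equiv.prodComm ℕ ℕ).tsum_eq g1

lemma Hshift : ∑' k : ℕ, (harmonic k : ℝ)/((k:ℝ)+1)^2
    = (∑' k : ℕ, (harmonic (k+1) : ℝ)/((k:ℝ)+1)^2) - ∑' k : ℕ, 1/((k:ℝ)+1)^3 := by
  rw [← Summable.tsum_sub summable_a (summable_z 3 (by norm_num))]
  refine tsum_congr fun k => ?_
  have : (harmonic (k+1) : ℝ) = (harmonic k : ℝ) + 1/((k:ℝ)+1) := by
    rw [harmonic_succ]
    push_cast
    ring
  rw [this]
  have h1 : ((k:ℝ)+1) ≠ 0 := by positivity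
  field_simp
  ring

lemma L1 : ∑' n : ℕ, (harmonic (n+1) : ℝ)/((n:ℝ)+1)^2
    = 2 * ∑' n : ℕ, 1/((n:ℝ)+1)^3 := by
  have hgg2 : ∑' p, gg p = 2 * ∑' q, g1 q := by
    rw [tsum_congr gg_split, Summable.tsum_add summable_g1 summable_g1swap, tsum_g1swap]
    ring
  have h := wayA.symm.trans (hgg2.trans (by rw [tsum_g1, Hshift]))
  linarith

lemma mainR : ∑' n : ℕ, (harmonic (n+1) : ℝ)/(((n:ℝ)+1)^2*((n:ℝ)+2)*((n:ℝ)+3))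
    = (∑' n : ℕ, 1/((n:ℝ)+1)^3) - (3/4) * (∑' n : ℕ, 1/((n:ℝ)+1)^2) + 1/4 := by
  have key : ∀ n : ℕ, (harmonic (n+1) : ℝ)/(((n:ℝ)+1)^2*((n:ℝ)+2)*((n:ℝ)+3))
      = (1/2) * ((harmonic (n+1) : ℝ)/((n:ℝ)+1)^2)
        - (3/4) * ((harmonic (n+1) : ℝ)/(((n:ℝ)+1)*((n:ℝ)+2)))
        + (1/4) * ((harmonic (n+1) : ℝ)/(((n:ℝ)+2)*((n:ℝ)+3))) := by
    intro n
    have h1 : ((n:ℝ)+1) ≠ 0 := by positivity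
    have h2 : ((n:ℝ)+2) ≠ 0 := by positivity
    have h3 : ((n:ℝ)+3) ≠ 0 := by positivity
    field_simp
    ring
  have S1 := summable_a.mul_left (1/2 : ℝ)
  have S2 := summable_b.mul_left (3/4 : ℝ)
  have S3 := summable_c.mul_left (1/4 : ℝ)
  calc ∑' n : ℕ, (harmonic (n+1) : ℝ)/(((n:ℝ)+1)^2*((n:ℝ)+2)*((n:ℝ)+3))
      = ∑' n : ℕ, ((1/2) * ((harmonic (n+1) : ℝ)/((n:ℝ)+1)^2)
        - (3/4) * ((harmonic (n+1) : ℝ)/(((n:ℝ)+1)*((n:ℝ)+2)))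
        + (1/4) * ((harmonic (n+1) : ℝ)/(((n:ℝ)+2)*((n:ℝ)+3)))) := tsum_congr key
    _ = (∑' n : ℕ, ((1/2) * ((harmonic (n+1) : ℝ)/((n:ℝ)+1)^2)
        - (3/4) * ((harmonic (n+1) : ℝ)/(((n:ℝ)+1)*((n:ℝ)+2)))))
        + ∑' n : ℕ, (1/4) * ((harmonic (n+1) : ℝ)/(((n:ℝ)+2)*((n:ℝ)+3))) :=
      Summable.tsum_add (S1.sub S2) S3
    _ = ((∑' n : ℕ, (1/2) * ((harmonic (n+1) : ℝ)/((n:ℝ)+1)^2))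
        - ∑' n : ℕ, (3/4) * ((harmonic (n+1) : ℝ)/(((n:ℝ)+1)*((n:ℝ)+2))))
        + ∑' n : ℕ, (1/4) * ((harmonic (n+1) : ℝ)/(((n:ℝ)+2)*((n:ℝ)+3))) := by
      rw [Summable.tsum_sub S1 S2]
    _ = (1/2) * (∑' n : ℕ, (harmonic (n+1) : ℝ)/((n:ℝ)+1)^2)
        - (3/4) * (∑' n : ℕ, (harmonic (n+1) : ℝ)/(((n:ℝ)+1)*((n:ℝ)+2)))
        + (1/4) * (∑' n : ℕ, (harmonic (n+1) : ℝ)/(((n:ℝ)+2)*((n:ℝ)+3))) := by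
      rw [tsum_mul_left, tsum_mul_left, tsum_mul_left]
    _ = _ := by
      rw [L1, L2, L3]
      ring

lemma shiftk {k : ℕ} (hk : 2 ≤ k) :
    ∑' n : ℕ, 1/(n:ℝ)^k = ∑' n : ℕ, 1/((n:ℝ)+1)^k := by
  rw [Summable.tsum_eq_zero_add (Real.summable_one_div_nat_pow.2 hk)]
  have h0 : (1:ℝ)/((0:ℕ):ℝ)^k = 0 := by
    rw [Nat.cast_zero, zero_pow (by omega), div_zero]
  rw [h0, zero_add]
  exact tsum_congr fun n => by push_cast; ring_nf

lemma zetaval {k : ℕ} (hk : 2 ≤ k) :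
    riemannZeta (k : ℂ) = ((∑' n : ℕ, 1/((n:ℝ)+1)^k : ℝ) : ℂ) := by
  calc riemannZeta (k : ℂ) = ∑' n : ℕ, 1/(n:ℂ)^k := zeta_nat_eq_tsum_of_gt_one (by omega)
    _ = ∑' n : ℕ, (((1/(n:ℝ)^k : ℝ)) : ℂ) := tsum_congr fun n => by push_cast; ring
    _ = ((∑' n : ℕ, 1/(n:ℝ)^k : ℝ) : ℂ) := (Complex.ofReal_tsum _).symm
    _ = _ := by rw [shiftk hk]

theorem stmt_6 :
    ∑' n : ℕ, (harmonic (n + 1) : ℂ) /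
        (((n : ℂ) + 1) ^ 2 * ((n : ℂ) + 2) * ((n : ℂ) + 3)) =
      riemannZeta 3 - (3 / 4) * riemannZeta 2 + 1 / 4 := by
  have h3 : riemannZeta 3 = ((∑' n : ℕ, 1/((n:ℝ)+1)^3 : ℝ) : ℂ) := by
    have := zetaval (k := 3) (by norm_num)
    rwa [show ((3:ℕ):ℂ) = (3:ℂ) by norm_cast] at this
  have h2 : riemannZeta 2 = ((∑' n : ℕ, 1/((n:ℝ)+1)^2 : ℝ) : ℂ) := by
    have := zetaval (k := 2) (by norm_num)
    rwa [show ((2:ℕ):ℂ) = (2:ℂ) by norm_cast] at this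
  have hL : ∑' n : ℕ, (harmonic (n + 1) : ℂ) /
        (((n : ℂ) + 1) ^ 2 * ((n : ℂ) + 2) * ((n : ℂ) + 3))
      = ((∑' n : ℕ, (harmonic (n+1) : ℝ)/(((n:ℝ)+1)^2*((n:ℝ)+2)*((n:ℝ)+3)) : ℝ) : ℂ) := by
    rw [Complex.ofReal_tsum]
    refine tsum_congr fun n => ?_
    push_cast
    ring
  rw [hL, h3, h2, mainR]
  push_cast
  ring
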